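/- arXiv:2011.09868 — 2 statements merged into one kernel-verified Lean document; each statement's English description precedes it below -/
import Mathlib

section
/- Let A be an iH₃△-algebra, H ⊆ A and a ∈ A, and let [H)ₘ denote the least modal deductive system containing H, and [b) the least deductive system (1∈D and x,x→y∈D imply y∈D) containing b. Then: (i) [H)ₘ = { x ∈ A : there exist h₁,…,h_k ∈ H with △h₁→(△h₂→(⋯→(△h_k→x)⋯)) = 1 }; (ii) [{a})ₘ = [△a); (iii) [H ∪ {a})ₘ = { x ∈ A : △a→x ∈ [H)ₘ }. -/
class iH3 (A : Type*) extends One A where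
  imp : A → A → A
  inf : A → A → A
  h1 : ∀ x y : A, imp x (imp y x) = 1
  h2 : ∀ x y z : A, imp (imp x (imp y z)) (imp (imp x y) (imp x z)) = 1
  h3 : ∀ x y : A, imp x y = 1 → imp y x = 1 → x = y
  it3 : ∀ x y z : A, imp (imp (imp x y) z) (imp (imp (imp z x) z) z) = 1
  ih1 : ∀ x y z : A, inf x (inf y z) = inf (inf x y) z
  ih2 : ∀ x : A, inf x x = x
  ih3 : ∀ x y : A, inf x (imp x y) = inf x y
  ih4 : ∀ x y z : A, imp (imp x (inf y z)) (inf (imp x z) (imp x y)) = 1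

class iH3D (A : Type*) extends iH3 A where
  box : A → A
  m1 : ∀ x : A, imp (box x) x = 1
  m2 : ∀ x y : A, imp (imp (imp y (box y)) (imp x (box (box x)))) (box (imp x y)) = imp (box x) (box (box y))
  m3 : ∀ x y : A, imp (imp (box x) (box y)) (box x) = box x

/-- A deductive system. -/
def isDS {A : Type*} [iH3D A] (D : Set A) : Prop :=
  (1 : A) ∈ D ∧ ∀ x y : A, x ∈ D → iH3.imp x y ∈ D → y ∈ D

/-- A modal deductive system. -/
def isMDS {A : Type*} [iH3D A] (D : Set A) : Prop :=
  isDS D ∧ ∀ x : A, x ∈ D → iH3D.box x ∈ D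

/-- The least deductive system containing `H`. -/
def genD {A : Type*} [iH3D A] (H : Set A) : Set A :=
  ⋂₀ {D : Set A | isDS D ∧ H ⊆ D}

/-- The least modal deductive system containing `H`. -/
def genM {A : Type*} [iH3D A] (H : Set A) : Set A :=
  ⋂₀ {D : Set A | isMDS D ∧ H ⊆ D}

/-- The iterated implication `△h₁→(△h₂→(⋯→(△h_k→x)⋯))`. -/
def chain {A : Type*} [iH3D A] (l : List A) (x : A) : A :=
  l.foldr (fun h acc => iH3.imp (iH3D.box h) acc) x


namespace Stmt6Aux

variable {A : Type*} [iH3D A]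

open iH3 iH3D

/-- Modus ponens at the level of equations. -/
lemma mp {a b : A} (ha : a = 1) (hab : imp a b = 1) : b = 1 := by
  subst ha
  have h := iH3.h1 b (1 : A)
  rw [hab] at h
  exact iH3.h3 b 1 h hab

lemma imp_self (a : A) : imp a a = 1 :=
  mp (iH3.h1 a a) (mp (iH3.h1 a (imp a a)) (iH3.h2 a (imp a a) a))

lemma imp_one (a : A) : imp a 1 = 1 := mp rfl (iH3.h1 1 a)

lemma one_imp (a : A) : imp 1 a = a := by
  have h₁ : imp (imp 1 a) a = 1 :=
    mp (imp_one _) (mp (imp_self _) (iH3.h2 (imp 1 a) 1 a))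
  exact iH3.h3 _ _ h₁ (iH3.h1 a 1)

lemma htrans {a b c : A} (h₁ : imp a b = 1) (h₂ : imp b c = 1) : imp a c = 1 := by
  have h : imp a (imp b c) = 1 := by rw [h₂]; exact imp_one a
  exact mp h₁ (mp h (iH3.h2 a b c))

lemma imp_frege {a b c : A} (h₁ : imp a (imp b c) = 1) (h₂ : imp a b = 1) : imp a c = 1 :=
  mp h₂ (mp h₁ (iH3.h2 a b c))

lemma mono {a b c : A} (h : imp b c = 1) : imp (imp a b) (imp a c) = 1 := by
  have h' : imp a (imp b c) = 1 := by rw [h]; exact imp_one a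
  exact mp h' (iH3.h2 a b c)

lemma anti {a b c : A} (h : imp b a = 1) : imp (imp a c) (imp b c) = 1 := by
  have h₃ := htrans (iH3.h1 (imp a c) b) (iH3.h2 b a c)
  rw [h, one_imp] at h₃
  exact h₃

lemma lift {a p q r : A} (t : imp p (imp q r) = 1) :
    imp (imp a p) (imp (imp a q) (imp a r)) = 1 :=
  htrans (mono t) (iH3.h2 a q r)

lemma exchange (a b c : A) : imp a (imp b c) = imp b (imp a c) := by
  have d : ∀ x y z : A, imp (imp x (imp y z)) (imp y (imp x z)) = 1 := fun x y z =>
    htrans (iH3.h2 x y z) (anti (iH3.h1 y x))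
  exact iH3.h3 _ _ (d a b c) (d b a c)

lemma contraction (a b : A) : imp a (imp a b) = imp a b := by
  have h₁ : imp (imp a (imp a b)) (imp a b) = 1 := by
    have h := iH3.h2 a a b
    rw [imp_self, one_imp] at h
    exact h
  exact iH3.h3 _ _ h₁ (iH3.h1 (imp a b) a)

lemma box_one : box (1 : A) = 1 := by
  have key : imp (box (1 : A)) (box (box (1 : A))) = box (1 : A) := by
    have h₂ := iH3D.m2 (1 : A) (1 : A)
    simp only [one_imp] at h₂
    have h₃ := iH3D.m3 (1 : A) (box (1 : A))
    rw [h₃] at h₂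
    exact h₂.symm
  calc box (1 : A) = imp (box 1) (box (box (1 : A))) := key.symm
    _ = imp (box 1) (imp (box 1) (box (box (1 : A)))) := (contraction _ _).symm
    _ = imp (box (1 : A)) (box (1 : A)) := by rw [key]
    _ = 1 := imp_self _

lemma box_box (a : A) : box (box a) = box a := by
  have h := iH3D.m2 a a
  rw [imp_self, box_one, imp_one] at h
  exact iH3.h3 _ _ (iH3D.m1 (box a)) h.symm

lemma box_mono {a b : A} (h : imp a b = 1) : imp (box a) (box b) = 1 := by
  have h₂ := iH3D.m2 a b
  rw [h, box_one, imp_one, box_box] at h₂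
  exact h₂.symm

lemma box_imp_box (h c : A) : box (imp (box h) c) = imp (box h) (box c) := by
  have h₂ := iH3D.m2 (box h) c
  simp only [box_box] at h₂
  rw [imp_self, imp_one, one_imp] at h₂
  exact h₂

lemma chain_cons (h : A) (l : List A) (x : A) :
    chain (h :: l) x = imp (box h) (chain l x) := rfl

lemma chain_one (l : List A) : chain l (1 : A) = 1 := by
  induction l with
  | nil => rfl
  | cons h t ih => rw [chain_cons, ih, imp_one]

lemma chain_append (l l' : List A) (x : A) :
    chain (l ++ l') x = chain l (chain l' x) := by
  induction l with
  | nil => rfl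
  | cons h t ih => rw [List.cons_append, chain_cons, chain_cons, ih]

lemma chain_swap (l : List A) (a x : A) :
    chain l (imp a x) = imp a (chain l x) := by
  induction l with
  | nil => rfl
  | cons h t ih => rw [chain_cons, chain_cons, ih, exchange]

lemma chain_K (l : List A) (x : A) : imp x (chain l x) = 1 := by
  induction l with
  | nil => exact imp_self x
  | cons h t ih => exact htrans ih (iH3.h1 (chain t x) (box h))

lemma chain_S (l : List A) (x y : A) :
    imp (chain l (imp x y)) (imp (chain l x) (chain l y)) = 1 := by
  induction l with
  | nil => exact imp_self _
  | cons h t ih => exact lift ih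

lemma chain_mp {l : List A} {x y : A} (hxy : chain l (imp x y) = 1)
    (hx : chain l x = 1) : chain l y = 1 :=
  mp hx (mp hxy (chain_S l x y))

lemma chain_thm (l : List A) {x : A} (h : x = 1) : chain l x = 1 := by
  rw [h]; exact chain_one l

lemma chain_weak_append {l : List A} (l' : List A) {x : A} (h : chain l x = 1) :
    chain (l ++ l') x = 1 := by
  rw [chain_append]
  exact chain_mp (chain_thm l (chain_K l' x)) h

lemma chain_weak_prepend (l' : List A) {l : List A} {x : A} (h : chain l x = 1) :
    chain (l' ++ l) x = 1 := by
  rw [chain_append, h]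
  exact chain_one l'

lemma box_chain (l : List A) (x : A) : box (chain l x) = chain l (box x) := by
  induction l with
  | nil => rfl
  | cons h t ih => rw [chain_cons, box_imp_box, ih, chain_cons]

lemma chain_box {l : List A} {x : A} (h : chain l x = 1) : chain l (box x) = 1 := by
  rw [← box_chain, h, box_one]

lemma S_isMDS (H : Set A) :
    isMDS {x : A | ∃ l : List A, (∀ h ∈ l, h ∈ H) ∧ chain l x = 1} := by
  refine ⟨⟨⟨[], by simp, rfl⟩, ?_⟩, ?_⟩
  · rintro x y ⟨l, hl, hx⟩ ⟨l', hl', hxy⟩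
    refine ⟨l' ++ l, ?_, ?_⟩
    · intro h hh
      rcases List.mem_append.mp hh with h1 | h1
      exacts [hl' _ h1, hl _ h1]
    · exact chain_mp (chain_weak_append l hxy) (chain_weak_prepend l' hx)
  · rintro x ⟨l, hl, hx⟩
    exact ⟨l, hl, chain_box hx⟩

lemma S_sub (H : Set A) :
    H ⊆ {x : A | ∃ l : List A, (∀ h ∈ l, h ∈ H) ∧ chain l x = 1} := by
  intro h hh
  exact ⟨[h], by simp [hh], iH3D.m1 h⟩

lemma chain_elem {D : Set A} (hD : isMDS D) :
    ∀ (l : List A) (x : A), (∀ h ∈ l, h ∈ D) → chain l x = 1 → x ∈ D := by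
  intro l
  induction l with
  | nil =>
    intro x _ hx
    have hx' : x = 1 := hx
    rw [hx']
    exact hD.1.1
  | cons h t ih =>
    intro x hmem hx
    rw [chain_cons, ← chain_swap] at hx
    have h1' : imp (box h) x ∈ D :=
      ih _ (fun g hg => hmem g (List.mem_cons_of_mem h hg)) hx
    have h2' : box h ∈ D := hD.2 h (hmem h (List.mem_cons_self (a := h) (l := t)))
    exact hD.1.2 _ _ h2' h1'

lemma part1 (H : Set A) :
    genM H = {x : A | ∃ l : List A, (∀ h ∈ l, h ∈ H) ∧ chain l x = 1} := by
  apply Set.Subset.antisymm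
  · exact Set.sInter_subset_of_mem ⟨S_isMDS H, S_sub H⟩
  · rintro x ⟨l, hl, hx⟩
    apply Set.mem_sInter.mpr
    rintro D ⟨hD, hsub⟩
    exact chain_elem hD l x (fun h hh => hsub (hl h hh)) hx

lemma genM_isMDS (H : Set A) : isMDS (genM H) := by
  rw [part1]; exact S_isMDS H

lemma sub_genM (H : Set A) : H ⊆ genM H := by
  rw [part1]; exact S_sub H

lemma genD_single (b : A) : genD {b} = {x : A | imp b x = 1} := by
  apply Set.Subset.antisymm
  · apply Set.sInter_subset_of_mem
    refine ⟨⟨imp_one b, fun x y hx hxy => imp_frege hxy hx⟩, ?_⟩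
    intro x hx
    rw [Set.mem_singleton_iff] at hx
    show imp b x = 1
    rw [hx]
    exact imp_self b
  · intro x hx
    apply Set.mem_sInter.mpr
    rintro D ⟨hD, hsub⟩
    refine hD.2 b x (hsub rfl) ?_
    rw [hx]
    exact hD.1

lemma part2 (a : A) : genM {a} = genD {iH3D.box a} := by
  rw [genD_single]
  apply Set.Subset.antisymm
  · apply Set.sInter_subset_of_mem
    refine ⟨⟨⟨imp_one _, fun x y hx hxy => imp_frege hxy hx⟩, fun x hx => ?_⟩, ?_⟩
    · have h := box_mono hx
      rwa [box_box] at h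
    · intro x hx
      rw [Set.mem_singleton_iff] at hx
      show imp (box a) x = 1
      rw [hx]
      exact iH3D.m1 a
  · intro x hx
    have hM := genM_isMDS ({a} : Set A)
    have ha : a ∈ genM {a} := sub_genM {a} rfl
    have hba : box a ∈ genM {a} := hM.2 a ha
    refine hM.1.2 _ _ hba ?_
    rw [hx]
    exact hM.1.1

lemma extract (H : Set A) (a : A) :
    ∀ (l : List A) (x : A), (∀ h ∈ l, h ∈ H ∪ {a}) → chain l x = 1 →
      ∃ l' : List A, (∀ h ∈ l', h ∈ H) ∧ chain l' (imp (box a) x) = 1 := by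
  intro l
  induction l with
  | nil =>
    intro x _ hx
    have hx' : x = 1 := hx
    refine ⟨[], by simp, ?_⟩
    show imp (box a) x = 1
    rw [hx']
    exact imp_one _
  | cons h t ih =>
    intro x hmem hx
    rw [chain_cons, ← chain_swap] at hx
    obtain ⟨l', hl', hc⟩ := ih (imp (box h) x)
      (fun g hg => hmem g (List.mem_cons_of_mem h hg)) hx
    rcases hmem h (List.mem_cons_self (a := h) (l := t)) with hH | hA
    · refine ⟨l' ++ [h], ?_, ?_⟩
      · intro g hg
        rcases List.mem_append.mp hg with h1 | h1
        · exact hl' g h1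
        · rw [List.mem_singleton.mp h1]; exact hH
      · rw [chain_append]
        have he : chain [h] (imp (box a) x) = imp (box a) (imp (box h) x) := by
          show imp (box h) (imp (box a) x) = _
          exact exchange _ _ _
        rw [he]
        exact hc
    · have hha : h = a := hA
      subst hha
      refine ⟨l', hl', ?_⟩
      rwa [contraction] at hc

lemma part3 (H : Set A) (a : A) :
    genM (H ∪ {a}) = {x : A | imp (box a) x ∈ genM H} := by
  rw [part1 (H ∪ {a}), part1 H]
  ext x
  simp only [Set.mem_setOf_eq]
  constructor
  · rintro ⟨l, hl, hx⟩
    exact extract H a l x hl hx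
  · rintro ⟨l', hl', hc⟩
    refine ⟨l' ++ [a], ?_, ?_⟩
    · intro g hg
      rcases List.mem_append.mp hg with h1 | h1
      · exact Or.inl (hl' g h1)
      · right
        rw [Set.mem_singleton_iff]
        exact List.mem_singleton.mp h1
    · rw [chain_append]
      exact hc

end Stmt6Aux

/-- Description of generated modal deductive systems in an iH₃△-algebra. -/
theorem stmt6 {A : Type*} [iH3D A] (H : Set A) (a : A) :
    genM H = {x : A | ∃ l : List A, (∀ h ∈ l, h ∈ H) ∧ chain l x = 1} ∧
    genM {a} = genD {iH3D.box a} ∧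
    genM (H ∪ {a}) = {x : A | iH3.imp (iH3D.box a) x ∈ genM H} := by
  exact ⟨Stmt6Aux.part1 H, Stmt6Aux.part2 a, Stmt6Aux.part3 H a⟩
end

section
/- Let Γ ∪ {φ} be a set of formulas of the calculus H³∨△ with Γ maximal non-trivial with respect to φ (i.e., Γ ⊬∨ φ and Γ ∪ {ψ} ⊢∨ φ for every formula ψ ∉ Γ). Then there exists a valuation v from the formula algebra to C₃^{→,∨} (a map with v(α→β)=v(α)→v(β), v(α∨β)=v(α)∨v(β), v(△α)=△v(α)) such that for every formula α, v(α) = 1 if and only if α ∈ Γ. -/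
inductive C3 : Type
  | zero
  | half
  | one
  deriving DecidableEq

namespace C3

def imp : C3 → C3 → C3
  | zero, _ => one
  | half, zero => zero
  | half, _ => one
  | one, y => y

def inf : C3 → C3 → C3
  | zero, _ => zero
  | half, zero => zero
  | half, _ => half
  | one, y => y

def sup : C3 → C3 → C3
  | zero, y => y
  | half, one => one
  | half, _ => half
  | one, _ => one

def box : C3 → C3
  | one => one
  | _ => zero

end C3

/-- Formulas of the calculus H³∨△, over connectives →, ∨, △. -/
inductive Fm : Type
  | var : Nat → Fm
  | imp : Fm → Fm → Fm
  | sup : Fm → Fm → Fm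
  | box : Fm → Fm

/-- Derivability from a set of premises in the calculus H³∨△. -/
inductive Der (Γ : Set Fm) : Fm → Prop
  | prem {α : Fm} : α ∈ Γ → Der Γ α
  | ax1 (α β : Fm) : Der Γ (α.imp (β.imp α))
  | ax2 (α β γ : Fm) : Der Γ ((α.imp (β.imp γ)).imp ((α.imp β).imp (α.imp γ)))
  | ax3 (α β γ : Fm) : Der Γ (((α.imp β).imp γ).imp (((γ.imp α).imp γ).imp γ))
  | ax4 (α β : Fm) : Der Γ (α.imp (α.sup β))
  | ax5 (α β : Fm) : Der Γ (β.imp (α.sup β))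
  | ax6 (α β γ : Fm) : Der Γ ((α.imp γ).imp ((β.imp γ).imp ((α.sup β).imp γ)))
  | ax7 (α : Fm) : Der Γ (α.box.imp α)
  | ax8 (α β : Fm) : Der Γ ((α.box.imp β).box.imp (α.box.imp β.box))
  | ax9 (α β : Fm) : Der Γ (((β.imp β.box).imp (α.imp ((α.imp β).box))).imp ((α.imp β).box))
  | ax10 (α β γ : Fm) : Der Γ (((α.box.imp β).imp γ).imp ((α.box.imp γ).imp γ))
  | mp {α β : Fm} : Der Γ α → Der Γ (α.imp β) → Der Γ β
  | nec {α : Fm} : Der Γ α → Der Γ α.box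

/-- A valuation of the formulas of H³∨△ in the three-element algebra
`C₃^{→,∨}`. -/
def IsVal (v : Fm → C3) : Prop :=
  (∀ α β : Fm, v (α.imp β) = C3.imp (v α) (v β)) ∧
  (∀ α β : Fm, v (α.sup β) = C3.sup (v α) (v β)) ∧
  (∀ α : Fm, v α.box = C3.box (v α))

namespace H3Aux

open Fm

variable {Γ : Set Fm} {a b c ψ χ : Fm}

/-- Composition of implications. -/
lemma comp (hab : Der Γ (a.imp b)) (hbc : Der Γ (b.imp c)) : Der Γ (a.imp c) := by
  have l1 : Der Γ (a.imp (b.imp c)) := .mp hbc (.ax1 _ _)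
  exact .mp hab (.mp l1 (.ax2 a b c))

/-- Identity. -/
lemma tI : Der Γ (a.imp a) :=
  .mp (.ax1 a a) (.mp (.ax1 a (a.imp a)) (.ax2 a (a.imp a) a))

/-- Swap of antecedents. -/
lemma swap (h : Der Γ (a.imp (b.imp c))) : Der Γ (b.imp (a.imp c)) :=
  comp (.ax1 b a) (.mp h (.ax2 a b c))

/-- From ⊢ a infer ⊢ (a→b)→b. -/
lemma rApply (h : Der Γ a) : Der Γ ((a.imp b).imp b) :=
  .mp h (swap tI)

/-- △-monotonicity rule. -/
lemma rm (h : Der Γ (a.imp b)) : Der Γ (a.box.imp b.box) :=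
  .mp (.nec (comp (.ax7 a) h)) (.ax8 a b)

/-- The B combinator. -/
lemma bcomb : Der Γ ((b.imp c).imp ((a.imp b).imp (a.imp c))) :=
  comp (.ax1 _ _) (.ax2 a b c)

/-- Key derived theorem: every implication implies its own △. -/
lemma dt : Der Γ ((a.imp b).imp (a.imp b).box) := by
  have s1 : Der Γ (b.box.imp (a.imp b).box) := rm (.ax1 b a)
  have s2 : Der Γ ((b.imp b.box).imp (b.imp (a.imp b).box)) :=
    .mp (.mp s1 (.ax1 _ b)) (.ax2 b _ _)
  have s3 : Der Γ ((b.imp (a.imp b).box).imp ((a.imp b).imp (a.imp (a.imp b).box))) := bcomb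
  have s5 : Der Γ ((a.imp b).imp ((b.imp b.box).imp (a.imp (a.imp b).box))) :=
    swap (comp s2 s3)
  exact comp s5 (.ax9 a b)

/-- Every formula implies its own △. -/
lemma stot : Der Γ (a.imp a.box) := by
  have u1 : Der Γ (a.imp ((a.imp a).imp a)) := .ax1 a (a.imp a)
  have u3 : Der Γ (((a.imp a).imp a).imp a) := rApply tI
  exact comp u1 (comp dt (rm u3))

/-- A strong form of excluded middle: ψ ∨ (ψ → b). -/
lemma p3' : Der Γ (ψ.sup (ψ.imp b)) := by
  have h1a : Der Γ ((ψ.box.imp b).imp (ψ.imp b)) := .mp stot (swap bcomb)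
  have h1 : Der Γ ((ψ.box.imp b).imp (ψ.sup (ψ.imp b))) :=
    comp h1a (.ax5 ψ (ψ.imp b))
  have h2 : Der Γ (ψ.box.imp (ψ.sup (ψ.imp b))) :=
    comp (.ax7 ψ) (.ax4 ψ (ψ.imp b))
  exact .mp h2 (.mp h1 (.ax10 ψ b (ψ.sup (ψ.imp b))))

/-- Cut. -/
lemma cut (h : Der (insert ψ Γ) χ) (hψ : Der Γ ψ) : Der Γ χ := by
  induction h with
  | prem hm =>
    rcases Set.mem_insert_iff.mp hm with rfl | hm
    · exact hψ
    · exact .prem hm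
  | ax1 α β => exact .ax1 α β
  | ax2 α β γ => exact .ax2 α β γ
  | ax3 α β γ => exact .ax3 α β γ
  | ax4 α β => exact .ax4 α β
  | ax5 α β => exact .ax5 α β
  | ax6 α β γ => exact .ax6 α β γ
  | ax7 α => exact .ax7 α
  | ax8 α β => exact .ax8 α β
  | ax9 α β => exact .ax9 α β
  | ax10 α β γ => exact .ax10 α β γ
  | mp _ _ ih1 ih2 => exact .mp ih1 ih2
  | nec _ ih => exact .nec ih

/-- △-deduction theorem. -/
lemma ded (h : Der (insert ψ Γ) χ) : Der Γ (ψ.box.imp χ) := by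
  induction h with
  | prem hm =>
    rcases Set.mem_insert_iff.mp hm with rfl | hm
    · exact .ax7 _
    · exact .mp (.prem hm) (.ax1 _ _)
  | ax1 α β => exact .mp (.ax1 α β) (.ax1 _ _)
  | ax2 α β γ => exact .mp (.ax2 α β γ) (.ax1 _ _)
  | ax3 α β γ => exact .mp (.ax3 α β γ) (.ax1 _ _)
  | ax4 α β => exact .mp (.ax4 α β) (.ax1 _ _)
  | ax5 α β => exact .mp (.ax5 α β) (.ax1 _ _)
  | ax6 α β γ => exact .mp (.ax6 α β γ) (.ax1 _ _)
  | ax7 α => exact .mp (.ax7 α) (.ax1 _ _)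
  | ax8 α β => exact .mp (.ax8 α β) (.ax1 _ _)
  | ax9 α β => exact .mp (.ax9 α β) (.ax1 _ _)
  | ax10 α β γ => exact .mp (.ax10 α β γ) (.ax1 _ _)
  | mp _ _ ih1 ih2 => exact .mp ih1 (.mp ih2 (.ax2 _ _ _))
  | nec _ ih => exact .mp (.nec ih) (.ax8 ψ _)

end H3Aux

/-- If `Γ` is maximal non-trivial with respect to `φ` in H³∨△, then there is a
valuation `v : Fm → C₃^{→,∨}` such that `v(α) = 1` iff `α ∈ Γ`. -/
theorem stmt18 (Γ : Set Fm) (φ : Fm)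
    (h1 : ¬ Der Γ φ) (h2 : ∀ ψ : Fm, ψ ∉ Γ → Der (insert ψ Γ) φ) :
    ∃ v : Fm → C3, IsVal v ∧ ∀ α : Fm, v α = C3.one ↔ α ∈ Γ := by
  classical
  -- Γ is deductively closed
  have closed : ∀ ψ : Fm, Der Γ ψ → ψ ∈ Γ := by
    intro ψ hd
    by_contra hn
    exact h1 (H3Aux.cut (h2 ψ hn) hd)
  -- every non-member implies φ
  have E' : ∀ ψ : Fm, ψ ∉ Γ → Der Γ (ψ.imp φ) := fun ψ hn =>
    H3Aux.comp H3Aux.stot (H3Aux.ded (h2 ψ hn))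
  -- classical behaviour: non-member implies everything
  have CL : ∀ α β : Fm, α ∉ Γ → (α.imp β) ∈ Γ := by
    intro α β hn
    by_contra hni
    have t1 : Der Γ (((α.imp β).imp φ).imp ((α.sup (α.imp β)).imp φ)) :=
      .mp (E' α hn) (.ax6 α (α.imp β) φ)
    have t2 : Der Γ ((α.sup (α.imp β)).imp φ) := .mp (E' _ hni) t1
    exact h1 (.mp H3Aux.p3' t2)
  refine ⟨fun α => if α ∈ Γ then C3.one else C3.zero, ⟨?_, ?_, ?_⟩, ?_⟩
  · -- implication
    intro α β
    by_cases hα : α ∈ Γ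
    · by_cases hβ : β ∈ Γ
      · have hm : α.imp β ∈ Γ := closed _ (.mp (.prem hβ) (.ax1 β α))
        simp only [hα, hβ, hm, if_pos]
        rfl
      · have hm : α.imp β ∉ Γ := fun h => hβ (closed _ (.mp (.prem hα) (.prem h)))
        simp only [hα, hβ, hm, if_pos, if_neg, not_false_iff]
        rfl
    · have hm : α.imp β ∈ Γ := CL α β hα
      by_cases hβ : β ∈ Γ <;>
        simp only [hα, hβ, hm, if_pos, if_neg, not_false_iff] <;> rfl
  · -- disjunction
    intro α β
    by_cases hα : α ∈ Γ
    · have hm : α.sup β ∈ Γ := closed _ (.mp (.prem hα) (.ax4 α β))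
      by_cases hβ : β ∈ Γ <;>
        simp only [hα, hβ, hm, if_pos, if_neg, not_false_iff] <;> rfl
    · by_cases hβ : β ∈ Γ
      · have hm : α.sup β ∈ Γ := closed _ (.mp (.prem hβ) (.ax5 α β))
        simp only [hα, hβ, hm, if_pos, if_neg, not_false_iff]
        rfl
      · have hm : α.sup β ∉ Γ := by
          intro h
          have t1 : Der Γ ((α.sup β).imp φ) :=
            .mp (E' β hβ) (.mp (E' α hα) (.ax6 α β φ))
          exact h1 (.mp (.prem h) t1)
        simp only [hα, hβ, hm, if_neg, not_false_iff]
        rfl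
  · -- box
    intro α
    by_cases hα : α ∈ Γ
    · have hm : α.box ∈ Γ := closed _ (.nec (.prem hα))
      simp only [hα, hm, if_pos]
      rfl
    · have hm : α.box ∉ Γ := fun h => hα (closed _ (.mp (.prem h) (.ax7 α)))
      simp only [hα, hm, if_neg, not_false_iff]
      rfl
  · intro α
    by_cases hα : α ∈ Γ
    · simp [hα]
    · show (if α ∈ Γ then C3.one else C3.zero) = C3.one ↔ α ∈ Γ
      rw [if_neg hα]
      exact ⟨fun h => C3.noConfusion h, fun h => absurd h hα⟩
end
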